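/- arXiv:1905.08837 — 2 statements merged into one kernel-verified Lean document; each statement's English description precedes it below -/
import Mathlib

section
/- Let f: ℝⁿ → ℝᵐ be strictly differentiable at x̄, and let ϑ: ℝᵐ → ℝ ∪ {∞} be convex, lower semicontinuous around f(x̄), and Lipschitz continuous around f(x̄) relative to its domain with constant ℓ. If x ↦ f(x) − dom ϑ is metrically subregular at (x̄,0), then ϑ∘f is lower regular at x̄ and the equality chain rule ∂(ϑ∘f)(x̄) = ∂̂(ϑ∘f)(x̄) = ∇f(x̄)*∂ϑ(f(x̄)) holds, where ∂̂ is the regular (Fréchet) subdifferential and ∂ the limiting subdifferential. -/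
open Filter Topology Metric Set

noncomputable section

abbrev Euc (n : ℕ) := EuclideanSpace ℝ (Fin n)

def edom {X : Type*} (φ : X → EReal) : Set X := {x | φ x ≠ ⊤}

section NormedDefs

variable {X Y : Type*} [NormedAddCommGroup X] [NormedSpace ℝ X]
  [NormedAddCommGroup Y] [NormedSpace ℝ Y]

/-- Bouligand (contingent) tangent cone. -/
def tangentConeB (Ω : Set X) (x : X) : Set X :=
  {w | ∃ t : ℕ → ℝ, ∃ wk : ℕ → X, (∀ k, 0 < t k) ∧ Tendsto t atTop (𝓝 0) ∧
      Tendsto wk atTop (𝓝 w) ∧ ∀ k, x + t k • wk k ∈ Ω}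

/-- Second-order tangent set. -/
def secondTangent (Ω : Set X) (x w : X) : Set X :=
  {u | ∃ t : ℕ → ℝ, ∃ uk : ℕ → X, (∀ k, 0 < t k) ∧ Tendsto t atTop (𝓝 0) ∧
      Tendsto uk atTop (𝓝 u) ∧ ∀ k, x + t k • w + ((t k) ^ 2 / 2) • uk k ∈ Ω}

/-- Subderivative (first-order epi-derivative). -/
def subderiv (φ : X → EReal) (x w : X) : EReal :=
  liminf (fun p : ℝ × X => ((p.1⁻¹ : ℝ) : EReal) * (φ (x + p.1 • p.2) - φ x))
    ((𝓝[>] (0:ℝ)) ×ˢ 𝓝 w)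

/-- `f` is twice differentiable at `x`: differentiable nearby and its derivative is
differentiable at `x`. -/
def TwiceDiffAt (f : X → Y) (x : X) : Prop :=
  (∀ᶠ y in 𝓝 x, DifferentiableAt ℝ f y) ∧ DifferentiableAt ℝ (fderiv ℝ f) x

/-- The second derivative of `f` at `x` evaluated at `(w, w)`. -/
def D2 (f : X → Y) (x w : X) : Y := fderiv ℝ (fderiv ℝ f) x w w

/-- Lipschitz continuity of `φ` around `x` relative to its domain, with constant `ℓ`. -/
def LipRelDom (φ : X → EReal) (x : X) (ℓ : ℝ) : Prop :=
  ∃ U ∈ 𝓝 x, ∀ y ∈ U, ∀ z ∈ U, φ y ≠ ⊤ → φ z ≠ ⊤ →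
    φ y ≤ φ z + ((ℓ * ‖y - z‖ : ℝ) : EReal)

/-- Metric subregularity of the mapping `x ↦ f x - D` at `(x, 0)` with constant `κ`:
the metric subregularity qualification condition. -/
def MSQCAt (f : X → Y) (D : Set Y) (x : X) (κ : ℝ) : Prop :=
  0 ≤ κ ∧ ∀ᶠ u in 𝓝 x, Metric.infDist u (f ⁻¹' D) ≤ κ * Metric.infDist (f u) D

/-- Epigraph of an extended-real-valued function. -/
def epiSet (ϑ : Y → EReal) : Set (Y × ℝ) := {p | ϑ p.1 ≤ (p.2 : EReal)}

end NormedDefs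

section InnerDefs

variable {X : Type*} [NormedAddCommGroup X] [InnerProductSpace ℝ X]

/-- Regular (Fréchet) subdifferential. -/
def frechetSubdiff (φ : X → EReal) (x : X) : Set X :=
  {v | ∀ ε : ℝ, 0 < ε → ∀ᶠ y in 𝓝 x,
      φ x + (((inner ℝ v (y - x) : ℝ) - ε * ‖y - x‖ : ℝ) : EReal) ≤ φ y}

/-- Limiting (Mordukhovich) subdifferential. -/
def limSubdiff (φ : X → EReal) (x : X) : Set X :=
  {v | ∃ xk : ℕ → X, ∃ vk : ℕ → X, Tendsto xk atTop (𝓝 x) ∧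
      Tendsto (fun k => φ (xk k)) atTop (𝓝 (φ x)) ∧
      Tendsto vk atTop (𝓝 v) ∧ ∀ k, vk k ∈ frechetSubdiff φ (xk k)}

/-- Proximal subdifferential. -/
def proxSubdiff (φ : X → EReal) (x : X) : Set X :=
  {v | ∃ r > (0:ℝ), ∃ γ > (0:ℝ), ∀ y ∈ Metric.ball x γ,
      φ x + (((inner ℝ v (y - x) : ℝ) - r / 2 * ‖y - x‖ ^ 2 : ℝ) : EReal) ≤ φ y}

/-- Second-order difference quotient. -/
def quadDiff (φ : X → EReal) (x v : X) (t : ℝ) (u : X) : EReal :=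
  ((2 / t ^ 2 : ℝ) : EReal) * (φ (x + t • u) - φ x - ((t * (inner ℝ v u : ℝ) : ℝ) : EReal))

/-- Second subderivative of `φ` at `x` for `v`. -/
def secondSubderiv (φ : X → EReal) (x v w : X) : EReal :=
  liminf (fun p : ℝ × X => quadDiff φ x v p.1 p.2) ((𝓝[>] (0:ℝ)) ×ˢ 𝓝 w)

/-- Parabolic subderivative of `φ` at `x` for `w` with respect to `z`. -/
def parabolicSubderiv (φ : X → EReal) (x w z : X) : EReal :=
  liminf (fun p : ℝ × X =>
      ((2 / p.1 ^ 2 : ℝ) : EReal) *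
        (φ (x + p.1 • w + (p.1 ^ 2 / 2) • p.2) - φ x - (p.1 : EReal) * subderiv φ x w))
    ((𝓝[>] (0:ℝ)) ×ˢ 𝓝 z)

/-- Critical cone of `φ` at `x` for `v`. -/
def critCone (φ : X → EReal) (x v : X) : Set X :=
  {w | subderiv φ x w = ((inner ℝ v w : ℝ) : EReal)}

/-- Convex polyhedral set. -/
def IsPolyhedral (Ω : Set X) : Prop :=
  ∃ (k : ℕ) (c : Fin k → X) (b : Fin k → ℝ), Ω = {x | ∀ i, (inner ℝ (c i) x : ℝ) ≤ b i}

/-- Polar cone. -/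
def polarCone (C : Set X) : Set X := {y | ∀ u ∈ C, (inner ℝ y u : ℝ) ≤ 0}

/-- A piecewise linear-quadratic representation of `ϑ`. -/
structure PLQRepr (ϑ : X → EReal) where
  s : ℕ
  piece : Fin s → Set X
  A : Fin s → (X →L[ℝ] X)
  a : Fin s → X
  cst : Fin s → ℝ
  poly : ∀ i, IsPolyhedral (piece i)
  symm : ∀ i x y, (inner ℝ (A i x) y : ℝ) = (inner ℝ x (A i y) : ℝ)
  dom_eq : edom ϑ = ⋃ i, piece i
  val : ∀ i, ∀ x ∈ piece i,
    ϑ x = ((1 / 2 * (inner ℝ (A i x) x : ℝ) + (inner ℝ (a i) x : ℝ) + cst i : ℝ) : EReal)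

/-- `ϑ` is piecewise linear-quadratic. -/
def IsPLQ (ϑ : X → EReal) : Prop := Nonempty (PLQRepr ϑ)

/-- Twice epi-differentiability of `φ` at `x` for `v`, via the recovery-sequence
characterization of epi-convergence of second-order difference quotients. -/
def TwiceEpiDiffAt (φ : X → EReal) (x v : X) : Prop :=
  ∀ w : X, ∀ t : ℕ → ℝ, (∀ k, 0 < t k) → Tendsto t atTop (𝓝 0) →
    ∃ wk : ℕ → X, Tendsto wk atTop (𝓝 w) ∧
      Tendsto (fun k => quadDiff φ x v (t k) (wk k)) atTop (𝓝 (secondSubderiv φ x v w))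

end InnerDefs

/-- Convexity for extended-real-valued functions. -/
def ERealConvexOn {X : Type*} [AddCommGroup X] [Module ℝ X] (φ : X → EReal) : Prop :=
  ∀ x y : X, ∀ t : ℝ, 0 ≤ t → t ≤ 1 →
    φ (t • x + (1 - t) • y) ≤ (t : EReal) * φ x + ((1 - t : ℝ) : EReal) * φ y

/-- The Lagrange multiplier set associated with `(x, v)` for the composition `ϑ ∘ f`. -/
def multSet {n m : ℕ} (f : Euc n → Euc m) (ϑ : Euc m → EReal) (x : Euc n) (v : Euc n) :
    Set (Euc m) :=
  {lam | lam ∈ limSubdiff ϑ (f x) ∧ ContinuousLinearMap.adjoint (fderiv ℝ f x) lam = v}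


/-!
Let `v` be a limiting subgradient of `ϑ ∘ f` at `x̄`, the limit of Fréchet subgradients `vₖ` at
points `xₖ → x̄`. Near `ȳ = f x̄`, replace `ϑ` by the Pasch–Hausdorff envelope `Θ` of its
restriction to `C = dom ϑ ∩ B(ȳ, r)`: a finite, convex, globally Lipschitz function that agrees
with `ϑ` on `C`. Metric subregularity moves each `y` near `xₖ` to a point `x'` of
`f⁻¹(dom ϑ)` with `‖y - x'‖ = O(dist (f y) (dom ϑ))`, and the Lipschitz continuity of `ϑ`
relative to its domain turns the Fréchet inequality at `x'` into an approximate Fréchet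
inequality for `Θ ∘ f` at `xₖ`, domain violations being paid for by the penalty in `Θ`.
Strict differentiability replaces `f` by its linearization, convexity of `Θ` makes the
inequality global, and `k → ∞` gives `Θ ȳ + ⟪v, u⟫ ≤ Θ (ȳ + ∇f(x̄) u)` for all `u`.
Hahn–Banach, applied to the (sublinear) directional derivative of `Θ` at `ȳ`, produces
`λ ∈ ∂Θ(ȳ) = ∂ϑ(ȳ)` with `∇f(x̄)* λ = v`. All other inclusions are elementary, since Fréchet
and limiting subgradients of a convex function are global subgradients.
-/

open scoped RealInnerProductSpace NNReal

lemma EReal.add_coe_le_iff_toReal {a b : EReal} (ha : a ≠ ⊤) (ha' : a ≠ ⊥) (hb : b ≠ ⊤)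
    (hb' : b ≠ ⊥) (c : ℝ) : a + c ≤ b ↔ a.toReal + c ≤ b.toReal := by
  lift a to ℝ using ⟨ha, ha'⟩
  lift b to ℝ using ⟨hb, hb'⟩
  norm_cast

lemma EReal.le_add_coe_iff_toReal {a b : EReal} (ha : a ≠ ⊤) (ha' : a ≠ ⊥) (hb : b ≠ ⊤)
    (hb' : b ≠ ⊥) (c : ℝ) : a ≤ b + c ↔ a.toReal ≤ b.toReal + c := by
  lift a to ℝ using ⟨ha, ha'⟩
  lift b to ℝ using ⟨hb, hb'⟩
  norm_cast

lemma le_of_eventually_sub_mul_le {a b r : ℝ} (h : ∀ᶠ ε in 𝓝[>] (0 : ℝ), a - ε * r ≤ b) :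
    a ≤ b := by
  refine le_of_tendsto ?_ h
  have : Tendsto (fun ε : ℝ => a - ε * r) (𝓝 0) (𝓝 (a - 0 * r)) :=
    (by fun_prop : Continuous fun ε : ℝ => a - ε * r).tendsto 0
  simpa using this.mono_left nhdsWithin_le_nhds

lemma ERealConvexOn.convexOn_toReal {X : Type*} [AddCommGroup X] [Module ℝ X] {ϑ : X → EReal}
    (hbot : ∀ y, ϑ y ≠ ⊥) (hconv : ERealConvexOn ϑ) :
    ConvexOn ℝ (edom ϑ) (fun y => (ϑ y).toReal) := by
  have key : ∀ x ∈ edom ϑ, ∀ y ∈ edom ϑ, ∀ a b : ℝ, 0 ≤ a → 0 ≤ b → a + b = 1 →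
      ϑ (a • x + b • y) ≤ ((a * (ϑ x).toReal + b * (ϑ y).toReal : ℝ) : EReal) := by
    intro x hx y hy a b ha hb hab
    obtain rfl : b = 1 - a := by linarith
    have h := hconv x y a ha (by linarith)
    rwa [← EReal.coe_toReal hx (hbot x), ← EReal.coe_toReal hy (hbot y), ← EReal.coe_mul,
      ← EReal.coe_mul, ← EReal.coe_add] at h
  refine ⟨fun x hx y hy a b ha hb hab => ne_top_of_le_ne_top (EReal.coe_ne_top _)
    (key x hx y hy a b ha hb hab), fun x hx y hy a b ha hb hab => ?_⟩
  have h := EReal.toReal_le_toReal (key x hx y hy a b ha hb hab) (hbot _) (EReal.coe_ne_top _)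
  rwa [EReal.toReal_coe] at h

lemma LipRelDom.exists_lipschitzOnWith_toReal {X : Type*} [NormedAddCommGroup X] [NormedSpace ℝ X]
    {φ : X → EReal} {x : X} {ℓ : ℝ} (hbot : ∀ y, φ y ≠ ⊥) (h : LipRelDom φ x ℓ) :
    ∃ U ∈ 𝓝 x, LipschitzOnWith ℓ.toNNReal (fun y => (φ y).toReal) (U ∩ edom φ) := by
  obtain ⟨U, hU, hlip⟩ := h
  refine ⟨U, hU, LipschitzOnWith.of_le_add_mul' ℓ fun y hy z hz => ?_⟩
  rw [dist_eq_norm]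
  exact (EReal.le_add_coe_iff_toReal hy.2 (hbot y) hz.2 (hbot z) _).1
    (hlip y hy.1 z hz.1 hy.2 hz.2)

section Subgradients

variable {E : Type*} [NormedAddCommGroup E] [InnerProductSpace ℝ E]

def convexSubdiff (ϑ : E → EReal) (x : E) : Set E :=
  {v | ∀ z, ϑ x + ((⟪v, z - x⟫ : ℝ) : EReal) ≤ ϑ z}

lemma ConvexOn.add_inner_sub_le_of_eventually {s : Set E} {g : E → ℝ} (hg : ConvexOn ℝ s g)
    {x w : E} {c : ℝ} (hx : x ∈ s)
    (hloc : ∀ᶠ y in 𝓝 x, y ∈ s → g x + (⟪w, y - x⟫ - c * ‖y - x‖) ≤ g y)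
    {y : E} (hy : y ∈ s) : g x + (⟪w, y - x⟫ - c * ‖y - x‖) ≤ g y := by
  have hpath : Tendsto (fun t : ℝ => x + t • (y - x)) (𝓝[>] 0) (𝓝 x) := by
    have : Tendsto (fun t : ℝ => x + t • (y - x)) (𝓝 0) (𝓝 (x + (0 : ℝ) • (y - x))) :=
      (by fun_prop : Continuous fun t : ℝ => x + t • (y - x)).tendsto 0
    simpa using this.mono_left nhdsWithin_le_nhds
  obtain ⟨t, hlocal, ht0, ht1⟩ :=
    ((hpath.eventually hloc).and (Ioo_mem_nhdsGT one_pos)).exists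
  have hseg : x + t • (y - x) = (1 - t) • x + t • y := by module
  have h1t : (0 : ℝ) ≤ 1 - t := by linarith
  have hconv := hg.2 hx hy h1t ht0.le (sub_add_cancel 1 t)
  rw [← hseg, smul_eq_mul, smul_eq_mul] at hconv
  have hlocal' := hlocal (hseg ▸ hg.1 hx hy h1t ht0.le (sub_add_cancel 1 t))
  rw [add_sub_cancel_left, inner_smul_right, norm_smul, Real.norm_of_nonneg ht0.le] at hlocal'
  nlinarith

lemma convexSubdiff_subset_frechetSubdiff (ϑ : E → EReal) (x : E) :
    convexSubdiff ϑ x ⊆ frechetSubdiff ϑ x := by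
  intro v hv ε hε
  filter_upwards with y
  refine le_trans (add_le_add_right ?_ _) (hv y)
  exact EReal.coe_le_coe_iff.2 (by nlinarith [norm_nonneg (y - x)])

lemma frechetSubdiff_subset_limSubdiff (ϑ : E → EReal) (x : E) :
    frechetSubdiff ϑ x ⊆ limSubdiff ϑ x := fun v hv =>
  ⟨fun _ => x, fun _ => v, tendsto_const_nhds, tendsto_const_nhds, tendsto_const_nhds,
    fun _ => hv⟩

variable {ϑ : E → EReal}

lemma ERealConvexOn.frechetSubdiff_subset_convexSubdiff (hbot : ∀ y, ϑ y ≠ ⊥)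
    (hconv : ERealConvexOn ϑ) {x : E} (hx : ϑ x ≠ ⊤) :
    frechetSubdiff ϑ x ⊆ convexSubdiff ϑ x := by
  intro v hv z
  by_cases hz : ϑ z = ⊤
  · simp [hz]
  rw [EReal.add_coe_le_iff_toReal hx (hbot x) hz (hbot z)]
  refine le_of_eventually_sub_mul_le (r := ‖z - x‖) ?_
  filter_upwards [self_mem_nhdsWithin] with ε (hε : 0 < ε)
  have hloc : ∀ᶠ y in 𝓝 x, y ∈ edom ϑ →
      (ϑ x).toReal + (⟪v, y - x⟫ - ε * ‖y - x‖) ≤ (ϑ y).toReal := by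
    filter_upwards [hv ε hε] with y hy hyD
    exact (EReal.add_coe_le_iff_toReal hx (hbot x) hyD (hbot y) _).1 hy
  have := (hconv.convexOn_toReal hbot).add_inner_sub_le_of_eventually hx hloc hz
  linarith

lemma ERealConvexOn.limSubdiff_subset_convexSubdiff (hbot : ∀ y, ϑ y ≠ ⊥)
    (hconv : ERealConvexOn ϑ) {x : E} (hx : ϑ x ≠ ⊤) :
    limSubdiff ϑ x ⊆ convexSubdiff ϑ x := by
  rintro v ⟨xk, vk, hxk, hϑk, hvk, hfr⟩ z
  by_cases hz : ϑ z = ⊤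
  · simp [hz]
  rw [EReal.add_coe_le_iff_toReal hx (hbot x) hz (hbot z)]
  have hlim : Tendsto (fun k => (ϑ (xk k)).toReal + ⟪vk k, z - xk k⟫) atTop
      (𝓝 ((ϑ x).toReal + ⟪v, z - x⟫)) :=
    ((EReal.tendsto_toReal hx (hbot x)).comp hϑk).add (hvk.inner (tendsto_const_nhds.sub hxk))
  refine le_of_tendsto hlim ?_
  filter_upwards [hϑk.eventually_ne hx] with k hk
  exact (EReal.add_coe_le_iff_toReal hk (hbot _) hz (hbot z) _).1
    (hconv.frechetSubdiff_subset_convexSubdiff hbot hk (hfr k) z)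

lemma ERealConvexOn.mem_convexSubdiff_of_eventually (hbot : ∀ y, ϑ y ≠ ⊥)
    (hconv : ERealConvexOn ϑ) {y lam : E} (hy : ϑ y ≠ ⊤)
    (h : ∀ᶠ z in 𝓝 y, ϑ y + ((⟪lam, z - y⟫ : ℝ) : EReal) ≤ ϑ z) : lam ∈ convexSubdiff ϑ y := by
  intro z
  by_cases hz : ϑ z = ⊤
  · simp [hz]
  have hloc : ∀ᶠ w in 𝓝 y, w ∈ edom ϑ →
      (ϑ y).toReal + (⟪lam, w - y⟫ - 0 * ‖w - y‖) ≤ (ϑ w).toReal := by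
    filter_upwards [h] with w hw hwD
    simpa using (EReal.add_coe_le_iff_toReal hy (hbot y) hwD (hbot w) _).1 hw
  rw [EReal.add_coe_le_iff_toReal hy (hbot y) hz (hbot z)]
  simpa using (hconv.convexOn_toReal hbot).add_inner_sub_le_of_eventually hy hloc hz

lemma ERealConvexOn.limSubdiff_eq_convexSubdiff (hbot : ∀ y, ϑ y ≠ ⊥) (hconv : ERealConvexOn ϑ)
    {x : E} (hx : ϑ x ≠ ⊤) : limSubdiff ϑ x = convexSubdiff ϑ x :=
  (hconv.limSubdiff_subset_convexSubdiff hbot hx).antisymm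
    ((convexSubdiff_subset_frechetSubdiff ϑ x).trans (frechetSubdiff_subset_limSubdiff ϑ x))

end Subgradients

section ChainRule

variable {E F : Type*} [NormedAddCommGroup E] [InnerProductSpace ℝ E] [CompleteSpace E]
  [NormedAddCommGroup F] [InnerProductSpace ℝ F] [CompleteSpace F]

lemma adjoint_mem_frechetSubdiff_comp {f : E → F} {f' : E →L[ℝ] F} {x : E}
    (hf : HasFDerivAt f f' x) {ϑ : F → EReal} {lam : F} (hlam : lam ∈ convexSubdiff ϑ (f x)) :
    ContinuousLinearMap.adjoint f' lam ∈ frechetSubdiff (fun x => ϑ (f x)) x := by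
  intro ε hε
  filter_upwards [hf.isLittleO.def (show 0 < ε / (‖lam‖ + 1) by positivity)] with y hy
  refine le_trans (add_le_add_right (EReal.coe_le_coe_iff.2 ?_) _) (hlam (f y))
  have hrem : ‖f y - f x - f' (y - x)‖ ≤ ε / (‖lam‖ + 1) * ‖y - x‖ := hy
  have hsplit : ⟪lam, f y - f x⟫ =
      ⟪ContinuousLinearMap.adjoint f' lam, y - x⟫ + ⟪lam, f y - f x - f' (y - x)⟫ := by
    rw [ContinuousLinearMap.adjoint_inner_left, ← inner_add_right, add_sub_cancel]
  have hcs := neg_le_of_abs_le (abs_real_inner_le_norm lam (f y - f x - f' (y - x)))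
  have hfac : ‖lam‖ * (ε / (‖lam‖ + 1)) ≤ ε := by
    rw [mul_div_assoc', div_le_iff₀ (by positivity)]
    nlinarith [norm_nonneg lam]
  have : ‖lam‖ * ‖f y - f x - f' (y - x)‖ ≤ ε * ‖y - x‖ :=
    calc ‖lam‖ * ‖f y - f x - f' (y - x)‖ ≤ ‖lam‖ * (ε / (‖lam‖ + 1) * ‖y - x‖) := by gcongr
      _ ≤ ε * ‖y - x‖ := by rw [← mul_assoc]; gcongr
  linarith

end ChainRule

section PaschHausdorff

variable {α : Type*} [PseudoMetricSpace α]

def paschHausdorff (C : Set α) (g : α → ℝ) (M : ℝ≥0) (z : α) : ℝ :=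
  ⨅ c : C, g c + M * dist z c

variable {C : Set α} {g : α → ℝ} {M : ℝ≥0}

lemma LipschitzOnWith.bddBelow_paschHausdorff (hg : LipschitzOnWith M g C) {c₀ : α}
    (hc₀ : c₀ ∈ C) (z : α) : BddBelow (range fun c : C => g c + M * dist z c) := by
  refine ⟨g c₀ - M * dist z c₀, ?_⟩
  rintro _ ⟨⟨c, hc⟩, rfl⟩
  have h₁ := hg.le_add_mul hc₀ hc
  have h₂ : M * dist c₀ c ≤ M * (dist z c₀ + dist z c) := by
    gcongr; exact dist_triangle_left _ _ _
  dsimp only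
  linarith

lemma paschHausdorff_le (hg : LipschitzOnWith M g C) {c : α} (hc : c ∈ C) (z : α) :
    paschHausdorff C g M z ≤ g c + M * dist z c :=
  ciInf_le (hg.bddBelow_paschHausdorff hc z) ⟨c, hc⟩

lemma le_paschHausdorff (hC : C.Nonempty) {a : ℝ} {z : α}
    (h : ∀ c ∈ C, a ≤ g c + M * dist z c) : a ≤ paschHausdorff C g M z :=
  have := hC.to_subtype
  le_ciInf fun c => h c c.2

lemma paschHausdorff_eq_of_mem (hg : LipschitzOnWith M g C) {z : α} (hz : z ∈ C) :
    paschHausdorff C g M z = g z :=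
  le_antisymm (by simpa using paschHausdorff_le hg hz z)
    (le_paschHausdorff ⟨z, hz⟩ fun _ hc => hg.le_add_mul hz hc)

lemma lipschitzWith_paschHausdorff (hg : LipschitzOnWith M g C) (hC : C.Nonempty) :
    LipschitzWith M (paschHausdorff C g M) := by
  refine LipschitzWith.of_le_add_mul M fun a b => ?_
  rw [← sub_le_iff_le_add]
  refine le_paschHausdorff hC fun c hc => ?_
  have h₁ := paschHausdorff_le hg hc a
  have h₂ : M * dist a c ≤ M * (dist a b + dist b c) := by gcongr; exact dist_triangle _ _ _
  linarith

lemma convexOn_paschHausdorff {E : Type*} [SeminormedAddCommGroup E] [NormedSpace ℝ E]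
    {C : Set E} {g : E → ℝ} (hgc : ConvexOn ℝ C g) (hg : LipschitzOnWith M g C)
    (hC : C.Nonempty) : ConvexOn ℝ univ (paschHausdorff C g M) := by
  have := hC.to_subtype
  refine ⟨convex_univ, fun z₁ _ z₂ _ a b ha hb hab => le_of_forall_pos_le_add fun ε hε => ?_⟩
  obtain ⟨⟨c₁, hc₁⟩, h₁⟩ := exists_lt_of_ciInf_lt (lt_add_of_pos_right (paschHausdorff C g M z₁) hε)
  obtain ⟨⟨c₂, hc₂⟩, h₂⟩ := exists_lt_of_ciInf_lt (lt_add_of_pos_right (paschHausdorff C g M z₂) hε)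
  have hdist : dist (a • z₁ + b • z₂) (a • c₁ + b • c₂) ≤ a * dist z₁ c₁ + b * dist z₂ c₂ := by
    refine (dist_add_add_le _ _ _ _).trans_eq ?_
    rw [dist_smul₀, dist_smul₀, Real.norm_of_nonneg ha, Real.norm_of_nonneg hb]
  calc paschHausdorff C g M (a • z₁ + b • z₂)
      ≤ g (a • c₁ + b • c₂) + M * dist (a • z₁ + b • z₂) (a • c₁ + b • c₂) :=
        paschHausdorff_le hg (hgc.1 hc₁ hc₂ ha hb hab) _
    _ ≤ (a * g c₁ + b * g c₂) + M * (a * dist z₁ c₁ + b * dist z₂ c₂) := by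
        gcongr
        simpa using hgc.2 hc₁ hc₂ ha hb hab
    _ = a * (g c₁ + M * dist z₁ c₁) + b * (g c₂ + M * dist z₂ c₂) := by ring
    _ ≤ a * (paschHausdorff C g M z₁ + ε) + b * (paschHausdorff C g M z₂ + ε) := by
        gcongr
    _ = a • paschHausdorff C g M z₁ + b • paschHausdorff C g M z₂ + ε := by
        simp only [smul_eq_mul]; linear_combination ε * hab

end PaschHausdorff

section DirectionalDerivative

variable {E : Type*} [NormedAddCommGroup E] [NormedSpace ℝ E]

/-- For convex `g` the difference quotients decrease as `t ↓ 0`, so this is the one-sided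
directional derivative `g'(x; z)`. -/
def convexDirDeriv (g : E → ℝ) (x z : E) : ℝ :=
  ⨅ t : Ioi (0 : ℝ), (g (x + (t : ℝ) • z) - g x) / t

variable {g : E → ℝ} {x : E} {M : ℝ≥0}

lemma LipschitzWith.convexDirDeriv_le (hg : LipschitzWith M g) (z : E) {t : ℝ} (ht : 0 < t) :
    convexDirDeriv g x z ≤ (g (x + t • z) - g x) / t := by
  have hbdd : BddBelow (range fun s : Ioi (0 : ℝ) => (g (x + (s : ℝ) • z) - g x) / s) := by
    refine ⟨-(M * ‖z‖), ?_⟩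
    rintro _ ⟨⟨s, hs : 0 < s⟩, rfl⟩
    have h := hg.le_add_mul x (x + s • z)
    rw [dist_self_add_right, norm_smul, Real.norm_of_nonneg hs.le] at h
    rw [le_div_iff₀ hs]
    linarith
  exact ciInf_le hbdd ⟨t, ht⟩

lemma le_convexDirDeriv {a : ℝ} {z : E}
    (h : ∀ t : ℝ, 0 < t → a ≤ (g (x + t • z) - g x) / t) : a ≤ convexDirDeriv g x z :=
  le_ciInf fun t => h t t.2

lemma LipschitzWith.convexDirDeriv_smul (hg : LipschitzWith M g) {c : ℝ} (hc : 0 < c) (z : E) :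
    convexDirDeriv g x (c • z) = c * convexDirDeriv g x z := by
  have hq : ∀ t, 0 < t →
      (g (x + t • c • z) - g x) / t = c * ((g (x + (t * c) • z) - g x) / (t * c)) := by
    intro t ht
    rw [smul_smul]
    field_simp
  refine le_antisymm ?_ (le_convexDirDeriv fun t ht => ?_)
  · rw [← div_le_iff₀' hc]
    refine le_convexDirDeriv fun t ht => ?_
    have h := hg.convexDirDeriv_le (x := x) (c • z) (div_pos ht hc)
    rwa [hq _ (div_pos ht hc), div_mul_cancel₀ _ hc.ne', ← div_le_iff₀' hc] at h
  · rw [hq t ht]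
    exact mul_le_mul_of_nonneg_left (hg.convexDirDeriv_le z (mul_pos ht hc)) hc.le

lemma ConvexOn.convexDirDeriv_add_le (hgc : ConvexOn ℝ univ g) (hg : LipschitzWith M g)
    (z₁ z₂ : E) : convexDirDeriv g x (z₁ + z₂) ≤ convexDirDeriv g x z₁ + convexDirDeriv g x z₂ := by
  refine le_of_forall_pos_le_add fun ε hε => ?_
  obtain ⟨⟨t, ht : 0 < t⟩, h₁⟩ :=
    exists_lt_of_ciInf_lt (lt_add_of_pos_right (convexDirDeriv g x z₁) (half_pos hε))
  obtain ⟨⟨s, hs : 0 < s⟩, h₂⟩ :=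
    exists_lt_of_ciInf_lt (lt_add_of_pos_right (convexDirDeriv g x z₂) (half_pos hε))
  set r := t * s / (t + s)
  have hr : 0 < r := by positivity
  have hw : s / (t + s) + t / (t + s) = 1 := by field_simp; ring
  -- `x + r • (z₁ + z₂)` lies on the segment between `x + t • z₁` and `x + s • z₂`
  have hcomb : x + r • (z₁ + z₂) = (s / (t + s)) • (x + t • z₁) + (t / (t + s)) • (x + s • z₂) := by
    calc x + r • (z₁ + z₂) = (s / (t + s) + t / (t + s)) • x + r • (z₁ + z₂) := by
          rw [hw, one_smul]
      _ = _ := by simp only [r]; module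
  have hconv := hgc.2 (mem_univ (x + t • z₁)) (mem_univ (x + s • z₂)) (by positivity)
    (by positivity) hw
  rw [← hcomb, smul_eq_mul, smul_eq_mul] at hconv
  have hslope : r * ((g (x + t • z₁) - g x) / t + (g (x + s • z₂) - g x) / s) =
      s / (t + s) * g (x + t • z₁) + t / (t + s) * g (x + s • z₂) - g x := by
    simp only [r]; field_simp; ring
  calc convexDirDeriv g x (z₁ + z₂) ≤ (g (x + r • (z₁ + z₂)) - g x) / r :=
        hg.convexDirDeriv_le _ hr
    _ ≤ (g (x + t • z₁) - g x) / t + (g (x + s • z₂) - g x) / s := by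
        rw [div_le_iff₀' hr]; linarith
    _ ≤ convexDirDeriv g x z₁ + convexDirDeriv g x z₂ + ε := by
        dsimp only at h₁ h₂; linarith

end DirectionalDerivative

section HahnBanach

variable {E F : Type*} [NormedAddCommGroup E] [InnerProductSpace ℝ E] [CompleteSpace E]
  [NormedAddCommGroup F] [InnerProductSpace ℝ F] [FiniteDimensional ℝ F]

lemma exists_adjoint_eq_of_inner_le_comp {p : F → ℝ}
    (hp_smul : ∀ c : ℝ, 0 < c → ∀ z, p (c • z) = c * p z) (hp_add : ∀ z w, p (z + w) ≤ p z + p w)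
    (A : E →L[ℝ] F) {v : E} (hv : ∀ u, ⟪v, u⟫ ≤ p (A u)) :
    ∃ lam : F, (∀ z, ⟪lam, z⟫ ≤ p z) ∧ ContinuousLinearMap.adjoint A lam = v := by
  have hp0 : p 0 = 0 := by
    have := hp_smul 2 two_pos 0
    rw [smul_zero] at this
    linarith
  have hker : LinearMap.ker (A : E →ₗ[ℝ] F) ≤ LinearMap.ker (innerₛₗ ℝ v) := by
    intro u hu
    rw [LinearMap.mem_ker] at hu ⊢
    have h₁ := hv u
    have h₂ := hv (-u)
    rw [map_neg, inner_neg_right] at h₂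
    simp only [ContinuousLinearMap.coe_coe] at hu
    simp only [innerₛₗ_apply_apply, hu, neg_zero, hp0] at h₁ h₂ ⊢
    linarith
  let φ : LinearMap.range (A : E →ₗ[ℝ] F) →ₗ[ℝ] ℝ :=
    (LinearMap.ker (A : E →ₗ[ℝ] F)).liftQ (innerₛₗ ℝ v) hker ∘ₗ
      (A : E →ₗ[ℝ] F).quotKerEquivRange.symm.toLinearMap
  have hφ : ∀ u, φ ⟨A u, LinearMap.mem_range_self _ u⟩ = ⟪v, u⟫ := fun u => by
    have h := (A : E →ₗ[ℝ] F).quotKerEquivRange_symm_apply_image u (LinearMap.mem_range_self _ u)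
    simpa [φ] using congrArg ((LinearMap.ker (A : E →ₗ[ℝ] F)).liftQ (innerₛₗ ℝ v) hker) h
  obtain ⟨g, hg_ext, hg_le⟩ := exists_extension_of_le_sublinear ⟨_, φ⟩ p hp_smul hp_add (by
    rintro ⟨_, u, rfl⟩
    exact (hφ u).trans_le (hv u))
  set lam := (InnerProductSpace.toDual ℝ F).symm (LinearMap.toContinuousLinearMap g)
  have hlam : ∀ z, ⟪lam, z⟫ = g z := fun z => InnerProductSpace.toDual_symm_apply
  refine ⟨lam, fun z => (hlam z).trans_le (hg_le z), ext_inner_right ℝ fun u => ?_⟩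
  rw [ContinuousLinearMap.adjoint_inner_left, hlam, ← hφ u]
  exact hg_ext ⟨A u, LinearMap.mem_range_self _ u⟩

lemma ConvexOn.exists_adjoint_eq_of_add_inner_le {Θ : F → ℝ} {M : ℝ≥0}
    (hΘ : ConvexOn ℝ univ Θ) (hL : LipschitzWith M Θ) (A : E →L[ℝ] F) {y : F} {v : E}
    (hv : ∀ u, Θ y + ⟪v, u⟫ ≤ Θ (y + A u)) :
    ∃ lam : F, (∀ z, Θ y + ⟪lam, z - y⟫ ≤ Θ z) ∧ ContinuousLinearMap.adjoint A lam = v := by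
  have hvA : ∀ u, ⟪v, u⟫ ≤ convexDirDeriv Θ y (A u) := fun u => le_convexDirDeriv fun t ht => by
    have h := hv (t • u)
    rw [inner_smul_right, map_smul] at h
    rw [le_div_iff₀ ht]
    linarith
  obtain ⟨lam, hlam, hadj⟩ := exists_adjoint_eq_of_inner_le_comp
    (fun c hc z => hL.convexDirDeriv_smul hc z) (hΘ.convexDirDeriv_add_le hL) A hvA
  refine ⟨lam, fun z => ?_, hadj⟩
  have h := (hlam (z - y)).trans (hL.convexDirDeriv_le (x := y) (z - y) one_pos)
  rw [one_smul, add_sub_cancel, div_one] at h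
  linarith

end HahnBanach

section LocalEstimates

lemma exists_mem_dist_le_infDist_add {α : Type*} [PseudoMetricSpace α] {S : Set α} {x : α}
    (hx : x ∈ S) (y : α) {δ : ℝ} (hδ : 0 < δ) :
    ∃ x' ∈ S, dist y x' ≤ infDist y S + δ * dist y x := by
  rcases (dist_nonneg (x := y) (y := x)).eq_or_lt with h | h
  · exact ⟨x, hx, by rw [← h]; simpa using infDist_nonneg⟩
  · obtain ⟨x', hx', hlt⟩ :=
      (infDist_lt_iff ⟨x, hx⟩).1 (lt_add_of_pos_right (infDist y S) (mul_pos hδ h))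
    exact ⟨x', hx', hlt.le⟩

lemma Filter.Eventually.forall_dist_le_mul {α : Type*} [PseudoMetricSpace α] {p : α → Prop}
    {x : α} (h : ∀ᶠ z in 𝓝 x, p z) (K : ℝ) :
    ∀ᶠ y in 𝓝 x, ∀ z, dist y z ≤ K * dist y x → p z := by
  obtain ⟨ρ, hρ, hball⟩ := Metric.eventually_nhds_iff.1 h
  have hK : 0 < |K| + 1 := by positivity
  filter_upwards [Metric.ball_mem_nhds x (div_pos hρ hK)] with y hy z hz
  apply hball
  rw [mem_ball, lt_div_iff₀ hK] at hy
  calc dist z x ≤ dist y z + dist y x := dist_triangle_left z x y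
    _ ≤ (|K| + 1) * dist y x := by nlinarith [le_abs_self K, dist_nonneg (x := y) (y := x)]
    _ < ρ := by linarith

variable {E F : Type*} [NormedAddCommGroup E] [NormedSpace ℝ E]
  [NormedAddCommGroup F] [NormedSpace ℝ F]

lemma HasStrictFDerivAt.eventually_eventually_norm_sub_le {f : E → F} {f' : E →L[ℝ] F} {a : E}
    (hf : HasStrictFDerivAt f f' a) {c : ℝ} (hc : 0 < c) :
    ∀ᶠ x in 𝓝 a, ∀ᶠ y in 𝓝 x, ‖f y - f x - f' (y - x)‖ ≤ c * ‖y - x‖ := by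
  have hdiag : Tendsto (fun x => (x, x)) (𝓝 a) (𝓝 (a, a)) :=
    (continuous_id.prodMk continuous_id).tendsto a
  filter_upwards [hdiag.eventually (hf.isLittleO.def hc).eventually_nhds] with x hx
  exact ((continuous_id.prodMk continuous_const).tendsto x).eventually hx

end LocalEstimates

section Penalty

variable {E F : Type*} [NormedAddCommGroup E] [InnerProductSpace ℝ E] [PseudoMetricSpace F]

lemma add_inner_sub_le_add_mul_dist {g : F → ℝ} {C : Set F} {ℓ L M : ℝ≥0}
    (hg : LipschitzOnWith ℓ g C) {f : E → F} {x x' y v : E} {c : F} {ε κ : ℝ} (hε : 0 < ε)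
    (hM : ℓ + κ * (‖v‖ + ε + ℓ * L) ≤ M) (hfr : g (f x) + (⟪v, x' - x⟫ - ε * ‖x' - x‖) ≤ g (f x'))
    (hx'C : f x' ∈ C) (hc : c ∈ C) (hfL : dist (f x') (f y) ≤ L * dist y x')
    (hd : dist y x' ≤ κ * dist (f y) c + ε / (‖v‖ + ε + ℓ * L) * ‖y - x‖) :
    g (f x) + (⟪v, y - x⟫ - 2 * ε * ‖y - x‖) ≤ g c + M * dist (f y) c := by
  set Q : ℝ := ‖v‖ + ε + ℓ * L
  have hQ : 0 < Q := by positivity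
  have hinner : ⟪v, y - x⟫ ≤ ⟪v, x' - x⟫ + ‖v‖ * dist y x' := by
    rw [show y - x = (x' - x) + (y - x') by abel, inner_add_right, dist_eq_norm]
    gcongr
    exact real_inner_le_norm v (y - x')
  have hx'x : ε * ‖x' - x‖ ≤ ε * (dist y x' + ‖y - x‖) := by
    rw [← dist_eq_norm, ← dist_eq_norm]
    exact mul_le_mul_of_nonneg_left (dist_triangle_left x' x y) hε.le
  have hfx'c : dist (f x') c ≤ L * dist y x' + dist (f y) c :=
    (dist_triangle _ _ _).trans (by gcongr)
  have hQε : Q * (ε / Q) = ε := mul_div_cancel₀ ε hQ.ne'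
  calc g (f x) + (⟪v, y - x⟫ - 2 * ε * ‖y - x‖)
      ≤ g (f x') + (‖v‖ + ε) * dist y x' - ε * ‖y - x‖ := by linarith
    _ ≤ g c + ℓ * dist (f y) c + Q * dist y x' - ε * ‖y - x‖ := by
        linear_combination hg.le_add_mul hx'C hc + mul_le_mul_of_nonneg_left hfx'c ℓ.coe_nonneg
    _ ≤ g c + (ℓ + κ * Q) * dist (f y) c := by
        linear_combination mul_le_mul_of_nonneg_left hd hQ.le + ‖y - x‖ * hQε
    _ ≤ g c + M * dist (f y) c := by gcongr

lemma eventually_add_inner_le_paschHausdorff_comp {f : E → F} {ϑ : F → EReal}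
    (hbot : ∀ y, ϑ y ≠ ⊥) {C : Set F} (hCD : C ⊆ edom ϑ) {ℓ L M : ℝ≥0}
    (hth : LipschitzOnWith ℓ (fun y => (ϑ y).toReal) C) {W : Set E} {κ : ℝ} (hκ : 0 ≤ κ)
    (hsub : ∀ u ∈ W, infDist u (f ⁻¹' edom ϑ) ≤ κ * infDist (f u) (edom ϑ))
    (hfL : LipschitzOnWith L f W) (hWC : ∀ u ∈ W, f u ∈ edom ϑ → f u ∈ C)
    {x v : E} (hW : W ∈ 𝓝 x) (hfx : f x ∈ edom ϑ) (hv : v ∈ frechetSubdiff (fun x => ϑ (f x)) x)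
    {ε : ℝ} (hε : 0 < ε) (hM : ℓ + κ * (‖v‖ + ε + ℓ * L) ≤ M) :
    ∀ᶠ y in 𝓝 x, paschHausdorff C (fun y => (ϑ y).toReal) M (f x) +
        (⟪v, y - x⟫ - 2 * ε * ‖y - x‖) ≤ paschHausdorff C (fun y => (ϑ y).toReal) M (f y) := by
  set δ := ε / (‖v‖ + ε + ℓ * L)
  have hδ : 0 < δ := by positivity
  have hthM : LipschitzOnWith M (fun y => (ϑ y).toReal) C :=
    hth.weaken (by
      have : 0 ≤ κ * (‖v‖ + ε + ℓ * L) := by positivity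
      rw [← NNReal.coe_le_coe]; linarith)
  have hxW := mem_of_mem_nhds hW
  have hfxC := hWC x hxW hfx
  filter_upwards [(Filter.Eventually.and hW (hv ε hε)).forall_dist_le_mul (κ * L + δ), hW]
    with y hnear hyW
  -- metric subregularity supplies a point of `f ⁻¹' edom ϑ` close to `y`
  obtain ⟨x', hx'D, hd⟩ := exists_mem_dist_le_infDist_add (S := f ⁻¹' edom ϑ) hfx y hδ
  replace hd : dist y x' ≤ κ * infDist (f y) (edom ϑ) + δ * dist y x :=
    hd.trans (by gcongr; exact hsub y hyW)
  obtain ⟨hx'W, hx'fr⟩ := hnear x' <|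
    calc dist y x' ≤ κ * (L * dist y x) + δ * dist y x := hd.trans <| by
          gcongr; exact (infDist_le_dist_of_mem hfx).trans (hfL.dist_le_mul y hyW x hxW)
      _ = (κ * L + δ) * dist y x := by ring
  rw [paschHausdorff_eq_of_mem hthM hfxC]
  refine le_paschHausdorff ⟨_, hfxC⟩ fun c hc => add_inner_sub_le_add_mul_dist hth hε hM
    ((EReal.add_coe_le_iff_toReal hfx (hbot _) hx'D (hbot _) _).1 hx'fr) (hWC x' hx'W hx'D) hc
    (by rw [dist_comm y x']; exact hfL.dist_le_mul x' hx'W y hyW) ?_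
  rw [← dist_eq_norm]
  exact hd.trans (by gcongr; exact infDist_le_dist_of_mem (hCD hc))

end Penalty

section Linearization

variable {E F : Type*} [NormedAddCommGroup E] [InnerProductSpace ℝ E]
  [NormedAddCommGroup F] [NormedSpace ℝ F]

lemma ConvexOn.add_inner_le_comp_add_of_eventually {Θ : F → ℝ} {M : ℝ≥0}
    (hΘ : ConvexOn ℝ univ Θ) (hL : LipschitzWith M Θ) {f : E → F} {f' : E →L[ℝ] F} {x v : E}
    {c c' : ℝ} (hloc : ∀ᶠ y in 𝓝 x, Θ (f x) + (⟪v, y - x⟫ - c * ‖y - x‖) ≤ Θ (f y))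
    (hf : ∀ᶠ y in 𝓝 x, ‖f y - f x - f' (y - x)‖ ≤ c' * ‖y - x‖) (u : E) :
    Θ (f x) + (⟪v, u⟫ - (c + M * c') * ‖u‖) ≤ Θ (f x + f' u) := by
  have hG : ConvexOn ℝ univ (fun w => Θ (f x + f' w)) := by
    simpa [Function.comp_def] using
      (hΘ.translate_right (f x)).comp_linearMap (f' : E →ₗ[ℝ] F)
  have hshift : Tendsto (fun w => x + w) (𝓝 0) (𝓝 x) := by
    simpa using (continuous_const_add x).tendsto (0 : E)
  have hloc' : ∀ᶠ w in 𝓝 (0 : E), w ∈ univ →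
      Θ (f x + f' 0) + (⟪v, w - 0⟫ - (c + M * c') * ‖w - 0‖) ≤ Θ (f x + f' w) := by
    filter_upwards [hshift.eventually hloc, hshift.eventually hf] with w h₁ h₂ _
    simp only [add_sub_cancel_left, map_zero, add_zero, sub_zero] at h₁ h₂ ⊢
    have h₃ := hL.le_add_mul (f (x + w)) (f x + f' w)
    rw [dist_eq_norm, show f (x + w) - (f x + f' w) = f (x + w) - f x - f' w by abel] at h₃
    linear_combination h₁ + h₃ + mul_le_mul_of_nonneg_left h₂ M.coe_nonneg
  simpa using hG.add_inner_sub_le_of_eventually (mem_univ 0) hloc' (mem_univ u)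

lemma add_inner_le_of_tendsto {Θ : F → ℝ} (hΘ : Continuous Θ) (A : E →L[ℝ] F) {yk : ℕ → F}
    {vk : ℕ → E} {y : F} {v : E} (hy : Tendsto yk atTop (𝓝 y)) (hv : Tendsto vk atTop (𝓝 v))
    {K : ℝ} (h : ∀ᶠ ε in 𝓝[>] 0, ∀ᶠ k in atTop, ∀ u,
      Θ (yk k) + (⟪vk k, u⟫ - K * ε * ‖u‖) ≤ Θ (yk k + A u)) (u : E) :
    Θ y + ⟪v, u⟫ ≤ Θ (y + A u) := by
  refine le_of_eventually_sub_mul_le (r := K * ‖u‖) ?_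
  filter_upwards [h] with ε hε
  have hl : Tendsto (fun k => Θ (yk k) + (⟪vk k, u⟫ - K * ε * ‖u‖)) atTop
      (𝓝 (Θ y + (⟪v, u⟫ - K * ε * ‖u‖))) :=
    ((hΘ.tendsto y).comp hy).add ((hv.inner tendsto_const_nhds).sub tendsto_const_nhds)
  have hr : Tendsto (fun k => Θ (yk k + A u)) atTop (𝓝 (Θ (y + A u))) :=
    (hΘ.tendsto _).comp (hy.add tendsto_const_nhds)
  linear_combination le_of_tendsto_of_tendsto hl hr (hε.mono fun k hk => hk u)

lemma add_inner_le_paschHausdorff_of_mem_limSubdiff {f : E → F} {f' : E →L[ℝ] F} {xb : E}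
    (hf : HasStrictFDerivAt f f' xb) {ϑ : F → EReal} (hbot : ∀ y, ϑ y ≠ ⊥)
    (hfin : ϑ (f xb) ≠ ⊤) {C : Set F} (hCD : C ⊆ edom ϑ) (hfC : f xb ∈ C)
    (hthc : ConvexOn ℝ C (fun y => (ϑ y).toReal)) {ℓ L M : ℝ≥0}
    (hth : LipschitzOnWith ℓ (fun y => (ϑ y).toReal) C) {W : Set E} {κ : ℝ} (hκ : 0 ≤ κ)
    (hsub : ∀ u ∈ W, infDist u (f ⁻¹' edom ϑ) ≤ κ * infDist (f u) (edom ϑ))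
    (hfL : LipschitzOnWith L f W) (hWC : ∀ u ∈ W, f u ∈ edom ϑ → f u ∈ C) (hW : W ∈ 𝓝 xb)
    {v : E} (hv : v ∈ limSubdiff (fun x => ϑ (f x)) xb) (hM : ℓ + κ * (‖v‖ + 2 + ℓ * L) ≤ M)
    (u : E) :
    paschHausdorff C (fun y => (ϑ y).toReal) M (f xb) + ⟪v, u⟫ ≤
      paschHausdorff C (fun y => (ϑ y).toReal) M (f xb + f' u) := by
  obtain ⟨xk, vk, hxk, hϑk, hvk, hfr⟩ := hv
  have hthM : LipschitzOnWith M (fun y => (ϑ y).toReal) C :=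
    hth.weaken (by
      have : 0 ≤ κ * (‖v‖ + 2 + ℓ * L) := by positivity
      rw [← NNReal.coe_le_coe]; linarith)
  have hΘL := lipschitzWith_paschHausdorff hthM ⟨_, hfC⟩
  refine add_inner_le_of_tendsto hΘL.continuous f' (yk := fun k => f (xk k))
    (hf.continuousAt.tendsto.comp hxk) hvk (K := 2 + M) ?_ u
  filter_upwards [Ioo_mem_nhdsGT one_pos] with ε ⟨hε, hε1⟩
  filter_upwards [hxk.eventually (eventually_eventually_nhds.2 hW),
    hxk.eventually (hf.eventually_eventually_norm_sub_le hε), hϑk.eventually_ne hfin,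
    hvk.norm.eventually (gt_mem_nhds (lt_add_one ‖v‖))] with k hkW hkf hkD hkv u
  have hloc := eventually_add_inner_le_paschHausdorff_comp hbot hCD hth hκ hsub hfL hWC hkW hkD
    (hfr k) hε (hM.trans' (by gcongr ℓ + κ * (?_ + _); linarith))
  linear_combination
    (convexOn_paschHausdorff hthc hthM ⟨_, hfC⟩).add_inner_le_comp_add_of_eventually hΘL hloc hkf u

end Linearization

section ChainRuleLimiting

variable {E F : Type*} [NormedAddCommGroup E] [InnerProductSpace ℝ E] [CompleteSpace E]
  [NormedAddCommGroup F] [InnerProductSpace ℝ F] [FiniteDimensional ℝ F]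

lemma limSubdiff_comp_subset_image_adjoint {f : E → F} {f' : E →L[ℝ] F} {xb : E}
    (hf : HasStrictFDerivAt f f' xb) {ϑ : F → EReal} (hbot : ∀ y, ϑ y ≠ ⊥)
    (hconv : ERealConvexOn ϑ) (hfin : ϑ (f xb) ≠ ⊤) {ℓ : ℝ} (hlip : LipRelDom ϑ (f xb) ℓ)
    {κ : ℝ} (hmsqc : MSQCAt f (edom ϑ) xb κ) :
    limSubdiff (fun x => ϑ (f x)) xb ⊆
      ContinuousLinearMap.adjoint f' '' convexSubdiff ϑ (f xb) := by
  intro v hv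
  obtain ⟨U, hU, hthU⟩ := hlip.exists_lipschitzOnWith_toReal hbot
  obtain ⟨r, hr, hrU⟩ := nhds_basis_closedBall.mem_iff.1 hU
  obtain ⟨L, s, hs, hfL⟩ := hf.exists_lipschitzOnWith
  set C := edom ϑ ∩ closedBall (f xb) r
  set W := s ∩ {u | infDist u (f ⁻¹' edom ϑ) ≤ κ * infDist (f u) (edom ϑ)} ∩
    f ⁻¹' closedBall (f xb) r
  have hW : W ∈ 𝓝 xb := inter_mem (inter_mem hs hmsqc.2)
    (hf.continuousAt.preimage_mem_nhds (closedBall_mem_nhds _ hr))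
  have hfC : f xb ∈ C := ⟨hfin, mem_closedBall_self hr.le⟩
  have hthc : ConvexOn ℝ C (fun y => (ϑ y).toReal) := (hconv.convexOn_toReal hbot).subset
    inter_subset_left ((hconv.convexOn_toReal hbot).1.inter (convex_closedBall _ _))
  have hth := hthU.mono fun y (hy : y ∈ C) => ⟨hrU hy.2, hy.1⟩
  set M : ℝ≥0 := ℓ.toNNReal + κ.toNNReal * (‖v‖₊ + 2 + ℓ.toNNReal * L)
  have hM : ℓ.toNNReal + κ * (‖v‖ + 2 + ℓ.toNNReal * L) = M := by
    simp [M, Real.coe_toNNReal κ hmsqc.1]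
  have hthM := hth.weaken (show ℓ.toNNReal ≤ M from le_self_add)
  have hΘ := convexOn_paschHausdorff hthc hthM ⟨_, hfC⟩
  obtain ⟨lam, hlam, hadj⟩ := hΘ.exists_adjoint_eq_of_add_inner_le
    (lipschitzWith_paschHausdorff hthM ⟨_, hfC⟩) f'
    (add_inner_le_paschHausdorff_of_mem_limSubdiff hf hbot hfin inter_subset_left hfC hthc hth
      hmsqc.1 (fun u hu => hu.1.2) (hfL.mono fun u hu => hu.1.1) (fun u hu hD => ⟨hD, hu.2⟩)
      hW hv hM.le)
  refine ⟨lam, hconv.mem_convexSubdiff_of_eventually hbot hfin ?_, hadj⟩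
  filter_upwards [closedBall_mem_nhds (f xb) hr] with z hz
  by_cases hzD : ϑ z = ⊤
  · simp [hzD]
  have h := hlam z
  rw [paschHausdorff_eq_of_mem hthM ⟨hzD, hz⟩, paschHausdorff_eq_of_mem hthM hfC] at h
  exact (EReal.add_coe_le_iff_toReal hfin (hbot _) hzD (hbot _) _).2 h

end ChainRuleLimiting

theorem stmt11_general {n m : ℕ} (f : Euc n → Euc m) (ϑ : Euc m → EReal) (xb : Euc n)
    (f' : Euc n →L[ℝ] Euc m) (hf : HasStrictFDerivAt f f' xb)
    (hbot : ∀ y, ϑ y ≠ ⊥) (hconv : ERealConvexOn ϑ) (hfin : ϑ (f xb) ≠ ⊤)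
    (ℓ : ℝ) (hlip : LipRelDom ϑ (f xb) ℓ)
    (κ : ℝ) (hmsqc : MSQCAt f (edom ϑ) xb κ) :
    limSubdiff (fun x => ϑ (f x)) xb = frechetSubdiff (fun x => ϑ (f x)) xb ∧
    limSubdiff (fun x => ϑ (f x)) xb =
      (ContinuousLinearMap.adjoint f') '' limSubdiff ϑ (f xb) := by
  rw [hconv.limSubdiff_eq_convexSubdiff hbot hfin]
  have h₁ := limSubdiff_comp_subset_image_adjoint hf hbot hconv hfin hlip hmsqc
  have h₂ : ContinuousLinearMap.adjoint f' '' convexSubdiff ϑ (f xb) ⊆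
      frechetSubdiff (fun x => ϑ (f x)) xb := by
    rintro _ ⟨lam, hlam, rfl⟩
    exact adjoint_mem_frechetSubdiff_comp hf.hasFDerivAt hlam
  have h₃ := frechetSubdiff_subset_limSubdiff (fun x => ϑ (f x)) xb
  exact ⟨(h₁.trans h₂).antisymm h₃, h₁.antisymm (h₂.trans h₃)⟩

/-- equality chain rule for limiting subgradients under metric
subregularity, with lower regularity of the composition. -/
theorem stmt11 {n m : ℕ} (f : Euc n → Euc m) (ϑ : Euc m → EReal) (xb : Euc n)
    (f' : Euc n →L[ℝ] Euc m) (hf : HasStrictFDerivAt f f' xb)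
    (hbot : ∀ y, ϑ y ≠ ⊥) (hconv : ERealConvexOn ϑ) (hfin : ϑ (f xb) ≠ ⊤)
    (hlsc : ∃ U ∈ 𝓝 (f xb), ∀ y ∈ U, LowerSemicontinuousAt ϑ y)
    (ℓ : ℝ) (hl : 0 ≤ ℓ) (hlip : LipRelDom ϑ (f xb) ℓ)
    (κ : ℝ) (hmsqc : MSQCAt f (edom ϑ) xb κ) :
    limSubdiff (fun x => ϑ (f x)) xb = frechetSubdiff (fun x => ϑ (f x)) xb ∧
    limSubdiff (fun x => ϑ (f x)) xb =
      (ContinuousLinearMap.adjoint f') '' limSubdiff ϑ (f xb) :=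
  stmt11_general f ϑ xb f' hf hbot hconv hfin ℓ hlip κ hmsqc
end
end

section
/- Let ϑ: ℝᵐ → ℝ ∪ {∞} be convex piecewise linear-quadratic with representation ϑ(y) = ½⟨A_i y, y⟩ + ⟨a_i, y⟩ + α_i on Ω_i, dom ϑ = ⋃ Ω_i. For any ȳ ∈ dom ϑ, w ∈ dom dϑ(ȳ), and z ∈ T²_{dom ϑ}(ȳ, w), the parabolic subderivative along the straight parabola exists as a full limit: d²ϑ(ȳ)(w; z) = lim_{t↓0} [ϑ(ȳ + tw + ½t²z) − ϑ(ȳ) − t dϑ(ȳ)(w)]/(½t²), and equals ⟨A_{i₀}ȳ + a_{i₀}, z⟩ + ⟨w, A_{i₀}w⟩ for a suitable index i₀ with z ∈ T²_{Ω_{i₀}}(ȳ,w). -/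
open Filter Topology Metric Set

noncomputable section

/-!
Every piece `Ωᵢ` is a polyhedron, so as soon as points `ȳ + t w + ½ t² u` with `t ↓ 0`, `u → z`
meet `Ωᵢ` frequently, the whole parabola `ȳ + τ w + ½ τ² z` lies in `Ωᵢ` for small `τ > 0`, and
`ȳ ∈ Ωᵢ`. On `Ωᵢ` the function is a quadratic, whose first- and second-order difference quotients
extend continuously to `t = 0`; two pieces that both contain the parabola therefore have the same
limits. Away from `dom ϑ` the quotients are `+∞`, so the liminf is that common limit.
-/

local notation "⟪" x ", " y "⟫" => inner ℝ x y

theorem liminf_eq_of_tendsto_on_pieces {α ι : Type*} [Finite ι] {F : Filter α}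
    {f : α → EReal} {c : EReal} (D : ι → Set α) (hdom : ∀ᶠ p in F, f p ≠ ⊤ → ∃ i, p ∈ D i)
    (hD : ∀ i, (∃ᶠ p in F, p ∈ D i) → Tendsto f (F ⊓ 𝓟 (D i)) (𝓝 c))
    {i₀ : ι} (hi₀ : ∃ᶠ p in F, p ∈ D i₀) : liminf f F = c := by
  refine le_antisymm ?_ ((le_liminf_iff).2 fun b hb => ?_)
  · have : (F ⊓ 𝓟 (D i₀)).NeBot := frequently_iff_neBot.1 hi₀
    calc liminf f F ≤ liminf f (F ⊓ 𝓟 (D i₀)) := liminf_le_liminf_of_le inf_le_left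
      _ = c := (hD i₀ hi₀).liminf_eq
  have hpiece : ∀ i, ∀ᶠ p in F, p ∈ D i → b < f p := fun i => by
    by_cases h : ∃ᶠ p in F, p ∈ D i
    · exact eventually_inf_principal.1 ((hD i h).eventually (lt_mem_nhds hb))
    · exact (not_frequently.1 h).mono fun p hp hpD => absurd hpD hp
  filter_upwards [hdom, eventually_all.2 hpiece] with p hp hpD
  by_cases htop : f p = ⊤
  · exact htop ▸ hb.trans_le le_top
  · obtain ⟨i, hi⟩ := hp htop
    exact hpD i hi

theorem eventually_fst_pos {β : Type*} (G : Filter β) :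
    ∀ᶠ p in 𝓝[>] (0 : ℝ) ×ˢ G, 0 < p.1 :=
  tendsto_fst.eventually self_mem_nhdsWithin

theorem tendsto_nhdsGT_prod {β : Type*} [TopologicalSpace β] {γ : Type*} [TopologicalSpace γ]
    {g : ℝ × β → γ} {b : β} (hg : ContinuousAt g (0, b)) :
    Tendsto g (𝓝[>] 0 ×ˢ 𝓝 b) (𝓝 (g (0, b))) :=
  hg.tendsto.mono_left (by rw [nhds_prod_eq]; exact prod_mono nhdsWithin_le_nhds le_rfl)

theorem Filter.Eventually.frequently_prod_nhds {α β : Type*} [TopologicalSpace β] {l : Filter α}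
    [l.NeBot] {b : β} {P : α × β → Prop} (h : ∀ᶠ a in l, P (a, b)) :
    ∃ᶠ p in l ×ˢ 𝓝 b, P p :=
  (tendsto_id.prodMk tendsto_const_nhds).frequently h.frequently

theorem eventually_add_mul_le_of_frequently {a b β : ℝ}
    (h : ∃ᶠ p in 𝓝[>] (0 : ℝ) ×ˢ 𝓝 β, a + p.1 * p.2 ≤ b) :
    ∀ᶠ τ in 𝓝[>] (0 : ℝ), a + τ * β ≤ b := by
  have hlim : Tendsto (fun p : ℝ × ℝ => a + p.1 * p.2) (𝓝[>] 0 ×ˢ 𝓝 β) (𝓝 a) := by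
    simpa using tendsto_nhdsGT_prod (g := fun p : ℝ × ℝ => a + p.1 * p.2) (b := β) (by fun_prop)
  have hab : a ≤ b := isClosed_Iic.mem_of_frequently_of_tendsto h hlim
  rcases hab.lt_or_eq with hlt | rfl
  · have hcont := hlim.comp (tendsto_id.prodMk (tendsto_const_nhds (x := β)))
    exact (hcont.eventually_lt_const hlt).mono fun τ h => h.le
  · have hβ : β ≤ 0 := by
      refine isClosed_Iic.mem_of_frequently_of_tendsto ?_
        (tendsto_snd (f := 𝓝[>] (0 : ℝ)) (g := 𝓝 β))
      refine (h.and_eventually (eventually_fst_pos _)).mono fun p ⟨hp, hpos⟩ => ?_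
      exact nonpos_of_mul_nonpos_right (by linarith) hpos
    filter_upwards [self_mem_nhdsWithin] with τ (hτ : 0 < τ)
    nlinarith

theorem eventually_add_mul_add_sq_le_of_frequently {a b β γ : ℝ}
    (h : ∃ᶠ p in 𝓝[>] (0 : ℝ) ×ˢ 𝓝 γ, a + p.1 * β + p.1 ^ 2 / 2 * p.2 ≤ b) :
    ∀ᶠ τ in 𝓝[>] (0 : ℝ), a + τ * β + τ ^ 2 / 2 * γ ≤ b := by
  have hlim : Tendsto (fun p : ℝ × ℝ => a + p.1 * β + p.1 ^ 2 / 2 * p.2) (𝓝[>] 0 ×ˢ 𝓝 γ)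
      (𝓝 a) := by
    convert tendsto_nhdsGT_prod
      (g := fun p : ℝ × ℝ => a + p.1 * β + p.1 ^ 2 / 2 * p.2) (b := γ) (by fun_prop) using 2
    simp
  have hab : a ≤ b := isClosed_Iic.mem_of_frequently_of_tendsto h hlim
  rcases hab.lt_or_eq with hlt | rfl
  · have hcont := hlim.comp (tendsto_id.prodMk (tendsto_const_nhds (x := γ)))
    exact (hcont.eventually_lt_const hlt).mono fun τ h => h.le
  · -- dividing by `τ` reduces the second-order condition to a first-order one
    have hfirst : ∃ᶠ p in 𝓝[>] (0 : ℝ) ×ˢ 𝓝 (γ / 2), β + p.1 * p.2 ≤ 0 := by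
      refine (tendsto_id.prodMap (tendsto_id.div_const 2)).frequently ?_
      refine (h.and_eventually (eventually_fst_pos _)).mono fun p ⟨hp, hpos⟩ => ?_
      have : p.1 * (β + p.1 * (p.2 / 2)) ≤ 0 := by nlinarith
      exact nonpos_of_mul_nonpos_right this hpos
    filter_upwards [eventually_add_mul_le_of_frequently hfirst, self_mem_nhdsWithin]
      with τ hτ (hpos : 0 < τ)
    nlinarith

section Tangent

variable {X : Type*} [NormedAddCommGroup X] [InnerProductSpace ℝ X]

theorem exists_mem_secondTangent_of_mem_iUnion {ι : Type*} [Finite ι] {Ω : ι → Set X}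
    {x w z : X} (hz : z ∈ secondTangent (⋃ i, Ω i) x w) :
    ∃ i, z ∈ secondTangent (Ω i) x w := by
  obtain ⟨t, u, ht, ht0, hu, hmem⟩ := hz
  obtain ⟨i, hi⟩ : ∃ i, ∃ᶠ k in atTop, x + t k • w + (t k ^ 2 / 2) • u k ∈ Ω i := by
    by_contra! h
    obtain ⟨k, hk⟩ := (eventually_all.2 h).exists
    exact (mem_iUnion.1 (hmem k)).elim hk
  obtain ⟨φ, hφ, hφmem⟩ := extraction_of_frequently_atTop hi
  exact ⟨i, t ∘ φ, u ∘ φ, fun k => ht _, ht0.comp hφ.tendsto_atTop,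
    hu.comp hφ.tendsto_atTop, hφmem⟩

theorem add_smul_add_half_smul {V : Type*} [AddCommGroup V] [Module ℝ V] (x w z : V) (t : ℝ) :
    x + t • (w + (t / 2) • z) = x + t • w + (t ^ 2 / 2) • z := by
  rw [smul_add, smul_smul, ← add_assoc]
  ring_nf

theorem frequently_parabola_of_mem_secondTangent {Ω : Set X} {x w z : X}
    (hz : z ∈ secondTangent Ω x w) :
    ∃ᶠ p in 𝓝[>] (0 : ℝ) ×ˢ 𝓝 z, x + p.1 • w + (p.1 ^ 2 / 2) • p.2 ∈ Ω := by
  obtain ⟨t, u, ht, ht0, hu, hmem⟩ := hz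
  have htin : Tendsto t atTop (𝓝[>] 0) :=
    tendsto_nhdsWithin_iff.2 ⟨ht0, Eventually.of_forall ht⟩
  exact (htin.prodMk hu).frequently (Frequently.of_forall hmem)

theorem frequently_ray_of_frequently_parabola {Ω : Set X} {x w z : X}
    (h : ∃ᶠ p in 𝓝[>] (0 : ℝ) ×ˢ 𝓝 z, x + p.1 • w + (p.1 ^ 2 / 2) • p.2 ∈ Ω) :
    ∃ᶠ p in 𝓝[>] (0 : ℝ) ×ˢ 𝓝 w, x + p.1 • p.2 ∈ Ω := by
  have hmap : Tendsto (fun p : ℝ × X => (p.1, w + (p.1 / 2) • p.2)) (𝓝[>] 0 ×ˢ 𝓝 z)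
      (𝓝[>] 0 ×ˢ 𝓝 w) := by
    refine tendsto_fst.prodMk ?_
    simpa using tendsto_nhdsGT_prod (g := fun p : ℝ × X => w + (p.1 / 2) • p.2) (b := z)
      (by fun_prop)
  exact hmap.frequently (h.mono fun p hp => by rwa [add_smul_add_half_smul])

theorem IsPolyhedral.isClosed {Ω : Set X} (hΩ : IsPolyhedral Ω) : IsClosed Ω := by
  obtain ⟨k, c, b, rfl⟩ := hΩ
  simp only [ofPred_forall]
  exact isClosed_iInter fun j => isClosed_le (by fun_prop) continuous_const

theorem IsPolyhedral.mem_of_frequently_ray {Ω : Set X} (hΩ : IsPolyhedral Ω) {x w : X}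
    (h : ∃ᶠ p in 𝓝[>] (0 : ℝ) ×ˢ 𝓝 w, x + p.1 • p.2 ∈ Ω) : x ∈ Ω := by
  refine hΩ.isClosed.mem_of_frequently_of_tendsto h ?_
  simpa using tendsto_nhdsGT_prod (g := fun p : ℝ × X => x + p.1 • p.2) (b := w) (by fun_prop)

theorem IsPolyhedral.eventually_ray_mem {Ω : Set X} (hΩ : IsPolyhedral Ω) {x w : X}
    (h : ∃ᶠ p in 𝓝[>] (0 : ℝ) ×ˢ 𝓝 w, x + p.1 • p.2 ∈ Ω) :
    ∀ᶠ τ in 𝓝[>] (0 : ℝ), x + τ • w ∈ Ω := by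
  obtain ⟨k, c, b, rfl⟩ := hΩ
  simp only [mem_ofPred_eq, eventually_all, inner_add_right, real_inner_smul_right] at h ⊢
  refine fun j => eventually_add_mul_le_of_frequently ?_
  refine (tendsto_id.prodMap ((continuous_const.inner continuous_id).tendsto w)).frequently ?_
  exact h.mono fun p hp => hp j

theorem IsPolyhedral.eventually_parabola_mem {Ω : Set X} (hΩ : IsPolyhedral Ω) {x w z : X}
    (h : ∃ᶠ p in 𝓝[>] (0 : ℝ) ×ˢ 𝓝 z, x + p.1 • w + (p.1 ^ 2 / 2) • p.2 ∈ Ω) :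
    ∀ᶠ τ in 𝓝[>] (0 : ℝ), x + τ • w + (τ ^ 2 / 2) • z ∈ Ω := by
  obtain ⟨k, c, b, rfl⟩ := hΩ
  simp only [mem_ofPred_eq, eventually_all, inner_add_right, real_inner_smul_right] at h ⊢
  refine fun j => eventually_add_mul_add_sq_le_of_frequently ?_
  refine (tendsto_id.prodMap ((continuous_const.inner continuous_id).tendsto z)).frequently ?_
  exact h.mono fun p hp => hp j

theorem IsPolyhedral.eventually_ray_mem_of_parabola {Ω : Set X} (hΩ : IsPolyhedral Ω)
    {x w z : X} (h : ∀ᶠ τ in 𝓝[>] (0 : ℝ), x + τ • w + (τ ^ 2 / 2) • z ∈ Ω) :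
    ∀ᶠ τ in 𝓝[>] (0 : ℝ), x + τ • w ∈ Ω :=
  hΩ.eventually_ray_mem (frequently_ray_of_frequently_parabola h.frequently_prod_nhds)

end Tangent

namespace PLQRepr

variable {X : Type*} [NormedAddCommGroup X] [InnerProductSpace ℝ X] {ϑ : X → EReal}
  (R : PLQRepr ϑ) {i j : Fin R.s} {x w z : X}

def grad (i : Fin R.s) (x : X) : X := R.A i x + R.a i

theorem exists_mem_piece {y : X} (hy : ϑ y ≠ ⊤) : ∃ i, y ∈ R.piece i :=
  mem_iUnion.1 (R.dom_eq ▸ hy)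

theorem sub_eq_of_mem (hx : x ∈ R.piece i) {v : X} (hxv : x + v ∈ R.piece i) :
    ϑ (x + v) - ϑ x = ((⟪R.grad i x, v⟫ + 1 / 2 * ⟪R.A i v, v⟫ : ℝ) : EReal) := by
  rw [R.val i _ hxv, R.val i _ hx, ← EReal.coe_sub, EReal.coe_eq_coe_iff]
  simp only [grad, map_add, inner_add_left, inner_add_right]
  linarith [R.symm i x v, real_inner_comm x (R.A i v)]

theorem tendsto_slope (hx : x ∈ R.piece i) :
    Tendsto (fun p : ℝ × X => ((p.1⁻¹ : ℝ) : EReal) * (ϑ (x + p.1 • p.2) - ϑ x))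
      ((𝓝[>] 0 ×ˢ 𝓝 w) ⊓ 𝓟 {p | x + p.1 • p.2 ∈ R.piece i}) (𝓝 ⟪R.grad i x, w⟫) := by
  have hlim : Tendsto (fun p : ℝ × X => ⟪R.grad i x, p.2⟫ + p.1 / 2 * ⟪R.A i p.2, p.2⟫)
      (𝓝[>] 0 ×ˢ 𝓝 w) (𝓝 ⟪R.grad i x, w⟫) := by
    simpa using tendsto_nhdsGT_prod
      (g := fun p : ℝ × X => ⟪R.grad i x, p.2⟫ + p.1 / 2 * ⟪R.A i p.2, p.2⟫) (b := w)
      (by fun_prop)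
  refine (EReal.tendsto_coe.2 (hlim.mono_left inf_le_left)).congr' ?_
  filter_upwards [(eventually_fst_pos _).filter_mono inf_le_left,
    mem_inf_of_right (mem_principal_self _)] with p hp hmem
  rw [R.sub_eq_of_mem hx hmem, ← EReal.coe_mul, EReal.coe_eq_coe_iff]
  simp only [map_smul, real_inner_smul_left, real_inner_smul_right]
  field_simp

theorem tendsto_parabolic_quotient (hx : x ∈ R.piece i) {d : ℝ} (hd : ⟪R.grad i x, w⟫ = d) :
    Tendsto (fun p : ℝ × X => ((2 / p.1 ^ 2 : ℝ) : EReal) *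
        (ϑ (x + p.1 • w + (p.1 ^ 2 / 2) • p.2) - ϑ x - (p.1 : EReal) * (d : EReal)))
      ((𝓝[>] 0 ×ˢ 𝓝 z) ⊓ 𝓟 {p | x + p.1 • w + (p.1 ^ 2 / 2) • p.2 ∈ R.piece i})
      (𝓝 ((⟪R.grad i x, z⟫ + ⟪w, R.A i w⟫ : ℝ) : EReal)) := by
  have hlim : Tendsto (fun p : ℝ × X => ⟪R.grad i x, p.2⟫ +
      ⟪w + (p.1 / 2) • p.2, R.A i (w + (p.1 / 2) • p.2)⟫)
      (𝓝[>] 0 ×ˢ 𝓝 z) (𝓝 (⟪R.grad i x, z⟫ + ⟪w, R.A i w⟫)) := by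
    simpa using tendsto_nhdsGT_prod (g := fun p : ℝ × X => ⟪R.grad i x, p.2⟫ +
      ⟪w + (p.1 / 2) • p.2, R.A i (w + (p.1 / 2) • p.2)⟫) (b := z) (by fun_prop)
  refine (EReal.tendsto_coe.2 (hlim.mono_left inf_le_left)).congr' ?_
  filter_upwards [(eventually_fst_pos _).filter_mono inf_le_left,
    mem_inf_of_right (mem_principal_self _)] with p hp hmem
  simp only [← add_smul_add_half_smul] at hmem ⊢
  rw [R.sub_eq_of_mem hx hmem, ← hd, ← EReal.coe_mul, ← EReal.coe_sub, ← EReal.coe_mul,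
    EReal.coe_eq_coe_iff]
  set v := w + (p.1 / 2) • p.2
  have hv : ⟪R.grad i x, v⟫ = ⟪R.grad i x, w⟫ + p.1 / 2 * ⟪R.grad i x, p.2⟫ := by
    rw [inner_add_right, real_inner_smul_right]
  simp only [map_smul, real_inner_smul_right, hv, real_inner_comm v]
  field_simp
  ring

theorem inner_grad_eq_of_frequently (hi : x ∈ R.piece i) (hj : x ∈ R.piece j)
    (h : ∃ᶠ p in 𝓝[>] (0 : ℝ) ×ˢ 𝓝 w, x + p.1 • p.2 ∈ R.piece i ∩ R.piece j) :
    ⟪R.grad i x, w⟫ = ⟪R.grad j x, w⟫ := by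
  let D k := {p : ℝ × X | x + p.1 • p.2 ∈ R.piece k}
  have : ((𝓝[>] 0 ×ˢ 𝓝 w) ⊓ 𝓟 (D i ∩ D j)).NeBot := frequently_iff_neBot.1 h
  exact EReal.coe_injective <| tendsto_nhds_unique
    ((R.tendsto_slope hi).mono_left (inf_le_inf_left _ (principal_mono.2 inter_subset_left)))
    ((R.tendsto_slope hj).mono_left (inf_le_inf_left _ (principal_mono.2 inter_subset_right)))

theorem second_order_eq_of_frequently (hi : x ∈ R.piece i) (hj : x ∈ R.piece j)
    (hd : ⟪R.grad i x, w⟫ = ⟪R.grad j x, w⟫)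
    (h : ∃ᶠ p in 𝓝[>] (0 : ℝ) ×ˢ 𝓝 z,
      x + p.1 • w + (p.1 ^ 2 / 2) • p.2 ∈ R.piece i ∩ R.piece j) :
    ⟪R.grad i x, z⟫ + ⟪w, R.A i w⟫ = ⟪R.grad j x, z⟫ + ⟪w, R.A j w⟫ := by
  let D k := {p : ℝ × X | x + p.1 • w + (p.1 ^ 2 / 2) • p.2 ∈ R.piece k}
  have : ((𝓝[>] 0 ×ˢ 𝓝 z) ⊓ 𝓟 (D i ∩ D j)).NeBot := frequently_iff_neBot.1 h
  exact EReal.coe_injective <| tendsto_nhds_unique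
    ((R.tendsto_parabolic_quotient hi hd).mono_left
      (inf_le_inf_left _ (principal_mono.2 inter_subset_left)))
    ((R.tendsto_parabolic_quotient hj rfl).mono_left
      (inf_le_inf_left _ (principal_mono.2 inter_subset_right)))

theorem subderiv_eq (hx : x ∈ R.piece i) (hray : ∀ᶠ τ in 𝓝[>] (0 : ℝ), x + τ • w ∈ R.piece i) :
    subderiv ϑ x w = ⟪R.grad i x, w⟫ := by
  refine liminf_eq_of_tendsto_on_pieces (fun j => {p : ℝ × X | x + p.1 • p.2 ∈ R.piece j})
    ?_ (fun j hj => ?_) (i₀ := i) hray.frequently_prod_nhds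
  · filter_upwards [eventually_fst_pos _] with p hp hne
    refine R.exists_mem_piece fun htop => hne ?_
    rw [htop, R.val i x hx, EReal.top_sub_coe, EReal.coe_mul_top_of_pos (inv_pos.2 hp)]
  · have hxj := (R.poly j).mem_of_frequently_ray hj
    rw [← R.inner_grad_eq_of_frequently hxj hx
      (((R.poly j).eventually_ray_mem hj).and hray).frequently_prod_nhds]
    exact R.tendsto_slope hxj

theorem parabolicSubderiv_eq (hx : x ∈ R.piece i)
    (hpar : ∀ᶠ τ in 𝓝[>] (0 : ℝ), x + τ • w + (τ ^ 2 / 2) • z ∈ R.piece i) :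
    parabolicSubderiv ϑ x w z = ((⟪R.grad i x, z⟫ + ⟪w, R.A i w⟫ : ℝ) : EReal) := by
  rw [parabolicSubderiv, R.subderiv_eq hx ((R.poly i).eventually_ray_mem_of_parabola hpar)]
  refine liminf_eq_of_tendsto_on_pieces
    (fun j => {p : ℝ × X | x + p.1 • w + (p.1 ^ 2 / 2) • p.2 ∈ R.piece j})
    ?_ (fun j hj => ?_) (i₀ := i) hpar.frequently_prod_nhds
  · filter_upwards [eventually_fst_pos _] with p hp hne
    refine R.exists_mem_piece fun htop => hne ?_
    rw [htop, R.val i x hx, EReal.top_sub_coe, ← EReal.coe_mul, EReal.top_sub_coe,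
      EReal.coe_mul_top_of_pos (by positivity)]
  · have hxj := (R.poly j).mem_of_frequently_ray (frequently_ray_of_frequently_parabola hj)
    have hboth : ∃ᶠ p in 𝓝[>] (0 : ℝ) ×ˢ 𝓝 z,
        x + p.1 • w + (p.1 ^ 2 / 2) • p.2 ∈ R.piece j ∩ R.piece i :=
      (((R.poly j).eventually_parabola_mem hj).and hpar).frequently_prod_nhds
    have hd := R.inner_grad_eq_of_frequently hxj hx (frequently_ray_of_frequently_parabola hboth)
    rw [← R.second_order_eq_of_frequently hxj hx hd hboth]
    exact R.tendsto_parabolic_quotient hxj hd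

theorem tendsto_parabolicSubderiv (hx : x ∈ R.piece i)
    (hpar : ∀ᶠ τ in 𝓝[>] (0 : ℝ), x + τ • w + (τ ^ 2 / 2) • z ∈ R.piece i) :
    Tendsto (fun t : ℝ => ((2 / t ^ 2 : ℝ) : EReal) *
        (ϑ (x + t • w + (t ^ 2 / 2) • z) - ϑ x - (t : EReal) * subderiv ϑ x w))
      (𝓝[>] 0) (𝓝 (parabolicSubderiv ϑ x w z)) := by
  rw [R.parabolicSubderiv_eq hx hpar,
    R.subderiv_eq hx ((R.poly i).eventually_ray_mem_of_parabola hpar)]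
  have hcurve : Tendsto (fun τ : ℝ => (τ, z)) (𝓝[>] 0)
      ((𝓝[>] 0 ×ˢ 𝓝 z) ⊓ 𝓟 {p | x + p.1 • w + (p.1 ^ 2 / 2) • p.2 ∈ R.piece i}) :=
    tendsto_inf.2 ⟨tendsto_id.prodMk tendsto_const_nhds, tendsto_principal.2 hpar⟩
  exact ((R.tendsto_parabolic_quotient hx rfl).comp hcurve).congr fun _ => rfl

end PLQRepr

theorem stmt14_general {m : ℕ} (ϑ : Euc m → EReal) (R : PLQRepr ϑ) (yb : Euc m) (w : Euc m)
    (z : Euc m) (hz : z ∈ secondTangent (edom ϑ) yb w) :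
    ∃ i0 : Fin R.s, yb ∈ R.piece i0 ∧ z ∈ secondTangent (R.piece i0) yb w ∧
      parabolicSubderiv ϑ yb w z =
        (((inner ℝ (R.A i0 yb + R.a i0) z : ℝ) + (inner ℝ w (R.A i0 w) : ℝ) : ℝ) : EReal) ∧
      Tendsto (fun t : ℝ =>
          ((2 / t ^ 2 : ℝ) : EReal) *
            (ϑ (yb + t • w + (t ^ 2 / 2) • z) - ϑ yb - (t : EReal) * subderiv ϑ yb w))
        (𝓝[>] (0:ℝ)) (𝓝 (parabolicSubderiv ϑ yb w z)) := by
  rw [R.dom_eq] at hz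
  obtain ⟨i₀, hz₀⟩ := exists_mem_secondTangent_of_mem_iUnion hz
  have hfreq := frequently_parabola_of_mem_secondTangent hz₀
  have hyb := (R.poly i₀).mem_of_frequently_ray (frequently_ray_of_frequently_parabola hfreq)
  have hpar := (R.poly i₀).eventually_parabola_mem hfreq
  exact ⟨i₀, hyb, hz₀, R.parabolicSubderiv_eq hyb hpar, R.tendsto_parabolicSubderiv hyb hpar⟩

/-- parabolic subderivatives of convex PWLQ functions exist as full limits
along the straight parabola, with an explicit value. -/
theorem stmt14 {m : ℕ} (ϑ : Euc m → EReal) (hbot : ∀ y, ϑ y ≠ ⊥)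
    (R : PLQRepr ϑ) (hconv : ERealConvexOn ϑ)
    (yb : Euc m) (hyb : ϑ yb ≠ ⊤)
    (w : Euc m) (hw : w ∈ tangentConeB (edom ϑ) yb)
    (z : Euc m) (hz : z ∈ secondTangent (edom ϑ) yb w) :
    ∃ i0 : Fin R.s, yb ∈ R.piece i0 ∧ z ∈ secondTangent (R.piece i0) yb w ∧
      parabolicSubderiv ϑ yb w z =
        (((inner ℝ (R.A i0 yb + R.a i0) z : ℝ) + (inner ℝ w (R.A i0 w) : ℝ) : ℝ) : EReal) ∧
      Tendsto (fun t : ℝ =>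
          ((2 / t ^ 2 : ℝ) : EReal) *
            (ϑ (yb + t • w + (t ^ 2 / 2) • z) - ϑ yb - (t : EReal) * subderiv ϑ yb w))
        (𝓝[>] (0:ℝ)) (𝓝 (parabolicSubderiv ϑ yb w z)) :=
  stmt14_general ϑ R yb w z hz
end
end
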